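/- For any word w over {a,b}, H_w equals the number of nonempty prefixes of w that are closed (i.e., the number of integers n with 1 ≤ n ≤ |w| such that the prefix of w of length n is closed). Moreover, if w is trapezoidal, then L_w equals the number of nonempty prefixes of w that are open. -/

import Mathlib

/-- The two-letter alphabet {a, b}. -/
inductive AB : Type
  | a : AB
  | b : AB
deriving DecidableEq, Repr

/-- A (finite) word over {a, b}. -/
abbrev Word := List AB

open AB

/-- `u` occurs in `w` at position `i`. -/
def OccursAt (u w : Word) (i : ℕ) : Prop :=
  i + u.length ≤ w.length ∧ (w.drop i).take u.length = u

/-- `u` occurs exactly once in `w` (is unrepeated in `w`). -/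
def OccursOnce (u w : Word) : Prop := ∃! i, OccursAt u w i

/-- `u` is a right special factor of `w`: both `ua` and `ub` are factors of `w`. -/
def IsRightSpecial (u w : Word) : Prop := (u ++ [a]) <:+: w ∧ (u ++ [b]) <:+: w

/-- `u` is a left special factor of `w`: both `au` and `bu` are factors of `w`. -/
def IsLeftSpecial (u w : Word) : Prop := ([a] ++ u) <:+: w ∧ ([b] ++ u) <:+: w

/-- `K w`: the length of the shortest unrepeated suffix of `w`. -/
noncomputable def Kp (w : Word) : ℕ := sInf {n | ∃ s : Word, s <:+ w ∧ s.length = n ∧ OccursOnce s w}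

/-- `H w`: the length of the shortest unrepeated prefix of `w`. -/
noncomputable def Hp (w : Word) : ℕ := sInf {n | ∃ p : Word, p <+: w ∧ p.length = n ∧ OccursOnce p w}

/-- `R w`: the smallest `n ≥ 0` such that `w` has no right special factor of length `n`. -/
noncomputable def Rp (w : Word) : ℕ := sInf {n | ∀ u : Word, u.length = n → ¬ IsRightSpecial u w}

/-- `L w`: the smallest `n ≥ 0` such that `w` has no left special factor of length `n`. -/
noncomputable def Lp (w : Word) : ℕ := sInf {n | ∀ u : Word, u.length = n → ¬ IsLeftSpecial u w}

/-- A word `w` is trapezoidal if `|w| = K w + R w`. -/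
def IsTrapezoidal (w : Word) : Prop := w.length = Kp w + Rp w

/-- A finite word over `{a,b}` is Sturmian iff it is balanced: there is no word `u`
with both `aua` and `bub` factors of `w`. -/
def IsSturmian (w : Word) : Prop :=
  ¬ ∃ u : Word, ([a] ++ u ++ [a]) <:+: w ∧ ([b] ++ u ++ [b]) <:+: w

/-- A nonempty word is closed if it has a border (a proper prefix which is also a suffix)
whose only occurrences in `w` are as a prefix and as a suffix. -/
def IsClosedWord (w : Word) : Prop :=
  w ≠ [] ∧ ∃ v : Word, v <+: w ∧ v.length < w.length ∧ v <:+ w ∧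
    ∀ i : ℕ, OccursAt v w i → i = 0 ∨ i + v.length = w.length

/-- A nonempty word is open if it is not closed. -/
def IsOpenWord (w : Word) : Prop := w ≠ [] ∧ ¬ IsClosedWord w

/-- Central words: `a^n`, `b^n`, or `u a b v = v b a u`. -/
def IsCentral (w : Word) : Prop :=
  (∃ n : ℕ, w = List.replicate n a) ∨ (∃ n : ℕ, w = List.replicate n b) ∨
  (∃ u v : Word, w = u ++ [a, b] ++ v ∧ w = v ++ [b, a] ++ u)

/-- The minimal period of `w`: `|w|` minus the length of the longest border of `w`. -/
noncomputable def minPeriod (w : Word) : ℕ :=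
  w.length - sSup {n | ∃ v : Word, v.length = n ∧ v <+: w ∧ v ≠ w ∧ v <:+ w}

/-!
Appending a letter `x` to `v` raises `H` by one exactly when `v ++ [x]` is closed: the shortest
unrepeated prefix `p` of `v` either stays unrepeated in `v ++ [x]`, or reappears as a suffix and is
then a border without internal occurrences; conversely such a border is unrepeated in `v`, hence
has `p` as a prefix. Induction along the prefixes of `w` gives the first claim.

For the second, let `f n` be the number of factors of length `n` and `s n`, `t n` the numbers of
right and left special ones. Counting extensions gives
`f (n + 1) - f n = s n - [K ≤ n] = t n - [H ≤ n]`, and telescoping gives `|w| = K + ∑ s`.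
As `s n > 0` exactly for `n < R`, `w` is trapezoidal iff `s ≤ 1` everywhere. For trapezoidal `w`
a combinatorial argument shows `min K R ≤ H`, which forces `t ≤ 1`: the reversal of `w` is
trapezoidal as well, that is `|w| = H + L`, and the open prefixes number `|w| - H = L`.
-/

/-! ### Occurrences -/

section Occurrences

variable {u v w : Word} {i : ℕ}

lemma occursAt_iff : OccursAt u w i ↔ ∃ s t : Word, s.length = i ∧ w = s ++ u ++ t := by
  constructor
  · rintro ⟨hle, heq⟩
    refine ⟨w.take i, w.drop (i + u.length), by simp only [List.length_take]; omega, ?_⟩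
    conv_lhs => rw [← List.take_append_drop i w, ← List.take_append_drop u.length (w.drop i)]
    rw [heq, List.drop_drop, List.append_assoc]
  · rintro ⟨s, t, rfl, rfl⟩
    refine ⟨by simp, ?_⟩
    rw [List.append_assoc, List.drop_left, List.take_left]

lemma OccursAt.length_le (h : OccursAt u w i) : i + u.length ≤ w.length := h.1

lemma infix_iff_exists_occursAt : u <:+: w ↔ ∃ i, OccursAt u w i := by
  constructor
  · rintro ⟨s, t, rfl⟩
    exact ⟨s.length, occursAt_iff.mpr ⟨s, t, rfl, rfl⟩⟩
  · rintro ⟨i, h⟩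
    obtain ⟨s, t, -, rfl⟩ := occursAt_iff.mp h
    exact ⟨s, t, rfl⟩

lemma occursAt_zero_iff_prefix : OccursAt u w 0 ↔ u <+: w := by
  rw [occursAt_iff]
  constructor
  · rintro ⟨s, t, hs, rfl⟩
    rw [List.length_eq_zero_iff.mp hs]
    exact ⟨t, rfl⟩
  · rintro ⟨t, rfl⟩
    exact ⟨[], t, rfl, rfl⟩

lemma List.IsSuffix.occursAt (h : u <:+ w) : OccursAt u w (w.length - u.length) := by
  obtain ⟨s, rfl⟩ := h
  exact occursAt_iff.mpr ⟨s, [], by simp, by simp⟩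

lemma OccursAt.isSuffix (h : OccursAt u w i) (hend : i + u.length = w.length) : u <:+ w := by
  obtain ⟨s, t, rfl, rfl⟩ := occursAt_iff.mp h
  obtain rfl : t = [] :=
    List.length_eq_zero_iff.mp (by simp only [List.length_append] at hend; omega)
  exact ⟨s, by simp⟩

lemma OccursAt.of_prefix (hvu : v <+: u) (h : OccursAt u w i) : OccursAt v w i := by
  obtain ⟨s, t, hs, rfl⟩ := occursAt_iff.mp h
  obtain ⟨r, rfl⟩ := hvu
  exact occursAt_iff.mpr ⟨s, r ++ t, hs, by simp⟩

lemma OccursAt.of_suffix (hvu : v <:+ u) (h : OccursAt u w i) :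
    OccursAt v w (i + (u.length - v.length)) := by
  obtain ⟨s, t, rfl, rfl⟩ := occursAt_iff.mp h
  obtain ⟨r, rfl⟩ := hvu
  exact occursAt_iff.mpr ⟨s ++ r, t, by simp, by simp⟩

lemma OccursAt.exists_append_singleton (h : OccursAt u w i) (hlt : i + u.length < w.length) :
    ∃ c : AB, OccursAt (u ++ [c]) w i := by
  obtain ⟨s, t, hs, rfl⟩ := occursAt_iff.mp h
  obtain ⟨c, t, rfl⟩ : ∃ c t', t = c :: t' := List.exists_cons_of_ne_nil (by
    rintro rfl
    simp only [List.append_nil, List.length_append] at hlt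
    omega)
  exact ⟨c, occursAt_iff.mpr ⟨s, t, hs, by simp⟩⟩

lemma OccursAt.append_right (h : OccursAt u v i) (z : Word) : OccursAt u (v ++ z) i := by
  obtain ⟨s, t, hs, rfl⟩ := occursAt_iff.mp h
  exact occursAt_iff.mpr ⟨s, t ++ z, hs, by simp⟩

lemma OccursAt.of_append_right {z : Word} (h : OccursAt u (v ++ z) i)
    (hle : i + u.length ≤ v.length) : OccursAt u v i := by
  have h2 := h.2
  rw [List.drop_append_of_le_length (by omega),
    List.take_append_of_le_length (by simp only [List.length_drop]; omega)] at h2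
  exact ⟨hle, h2⟩

lemma OccursAt.reverse (h : OccursAt u w i) :
    OccursAt u.reverse w.reverse (w.length - (i + u.length)) := by
  obtain ⟨s, t, rfl, rfl⟩ := occursAt_iff.mp h
  refine occursAt_iff.mpr ⟨t.reverse, s.reverse, ?_, by simp⟩
  simp only [List.length_reverse, List.length_append]
  omega

lemma not_occursOnce_of_ne {j : ℕ} (hi : OccursAt u w i) (hj : OccursAt u w j) (hij : i ≠ j) :
    ¬ OccursOnce u w :=
  fun h => hij (h.unique hi hj)

lemma exists_ne_of_not_occursOnce {j : ℕ} (hj : OccursAt u w j) (h : ¬ OccursOnce u w) :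
    ∃ i, OccursAt u w i ∧ i ≠ j := by
  by_contra! hne
  exact h ⟨j, hj, hne⟩

lemma occursOnce_self (w : Word) : OccursOnce w w :=
  ⟨0, occursAt_zero_iff_prefix.mpr (List.prefix_refl w), fun i hi => by
    have := hi.length_le
    omega⟩

lemma OccursOnce.reverse (h : OccursOnce u w) : OccursOnce u.reverse w.reverse := by
  obtain ⟨i, hi, huniq⟩ := h
  refine ⟨_, hi.reverse, fun j hj => ?_⟩
  have hj' := hj.reverse
  simp only [List.reverse_reverse, List.length_reverse] at hj'
  have := huniq _ hj'
  have := hi.length_le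
  have := hj.length_le
  simp only [List.length_reverse] at this
  omega

lemma occursOnce_reverse_iff : OccursOnce u.reverse w.reverse ↔ OccursOnce u w :=
  ⟨fun h => by simpa using h.reverse, OccursOnce.reverse⟩

lemma OccursOnce.append_left {r : Word} (h : OccursOnce u w) (hru : r ++ u <:+: w) :
    OccursOnce (r ++ u) w := by
  obtain ⟨i, hi⟩ := infix_iff_exists_occursAt.mp hru
  refine ⟨i, hi, fun j hj => ?_⟩
  have := h.unique (hi.of_suffix (List.suffix_append r u)) (hj.of_suffix (List.suffix_append r u))
  omega

end Occurrences

/-! ### The parameters `K`, `H`, `R`, `L` -/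

lemma sInf_setOf_le_iff {P : ℕ → Prop} (h : ∃ k, P k) {n : ℕ} :
    sInf {k | P k} ≤ n ↔ ∃ m ≤ n, P m := by
  constructor
  · exact fun hle => ⟨_, hle, Nat.sInf_mem h⟩
  · rintro ⟨m, hm, hP⟩
    exact (Nat.sInf_le hP).trans hm

lemma Kp_le_length (w : Word) : Kp w ≤ w.length :=
  Nat.sInf_le ⟨w, List.suffix_refl w, rfl, occursOnce_self w⟩

lemma Kp_le_iff {w : Word} {n : ℕ} (hn : n ≤ w.length) :
    Kp w ≤ n ↔ OccursOnce (w.drop (w.length - n)) w := by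
  have hlen : (w.drop (w.length - n)).length = n := by simp only [List.length_drop]; omega
  rw [Kp, sInf_setOf_le_iff ⟨_, w, List.suffix_refl w, rfl, occursOnce_self w⟩]
  constructor
  · rintro ⟨m, hm, s, hs, rfl, honce⟩
    obtain ⟨r, hr⟩ :=
      List.suffix_of_suffix_length_le hs (List.drop_suffix (w.length - n) w) (by omega)
    rw [← hr]
    exact honce.append_left (hr ▸ (List.drop_suffix _ w).isInfix)
  · exact fun h => ⟨n, le_rfl, _, List.drop_suffix _ w, hlen, h⟩

lemma Kp_reverse (w : Word) : Kp w.reverse = Hp w := by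
  have hset : {n | ∃ s : Word, s <:+ w.reverse ∧ s.length = n ∧ OccursOnce s w.reverse} =
      {n | ∃ p : Word, p <+: w ∧ p.length = n ∧ OccursOnce p w} := by
    ext n
    constructor
    · rintro ⟨s, hs, rfl, honce⟩
      refine ⟨s.reverse, ?_, s.length_reverse, ?_⟩
      · simpa using List.reverse_prefix.mpr hs
      · simpa using honce.reverse
    · rintro ⟨p, hp, rfl, honce⟩
      exact ⟨p.reverse, List.reverse_suffix.mpr hp, p.length_reverse, honce.reverse⟩
  rw [Kp, Hp, hset]

lemma Hp_le_length (w : Word) : Hp w ≤ w.length := by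
  simpa [Kp_reverse] using Kp_le_length w.reverse

lemma Hp_le_iff {w : Word} {n : ℕ} (hn : n ≤ w.length) :
    Hp w ≤ n ↔ OccursOnce (w.take n) w := by
  rw [← Kp_reverse, Kp_le_iff (by simpa using hn), List.length_reverse, List.drop_reverse,
    Nat.sub_sub_self hn, occursOnce_reverse_iff]

lemma IsRightSpecial.of_suffix {u v w : Word} (h : IsRightSpecial u w) (hvu : v <:+ u) :
    IsRightSpecial v w := by
  obtain ⟨r, rfl⟩ := hvu
  exact ⟨(List.infix_append r _ []).trans (by simpa using h.1),
    (List.infix_append r _ []).trans (by simpa using h.2)⟩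

lemma isRightSpecial_reverse_iff {u w : Word} :
    IsRightSpecial u.reverse w.reverse ↔ IsLeftSpecial u w := by
  simp only [IsRightSpecial, IsLeftSpecial, ← List.reverse_infix (l₁ := [_] ++ u),
    List.reverse_append, List.reverse_singleton]

lemma Rp_le_iff {w : Word} {n : ℕ} :
    Rp w ≤ n ↔ ∀ u : Word, u.length = n → ¬ IsRightSpecial u w := by
  have hlong : ∀ u : Word, u.length = w.length → ¬ IsRightSpecial u w := fun u hu h => by
    have := h.1.length_le
    simp [hu] at this
  rw [Rp, sInf_setOf_le_iff ⟨_, hlong⟩]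
  constructor
  · rintro ⟨m, hm, hnone⟩ u hu h
    exact hnone (u.drop (n - m)) (by simp only [List.length_drop]; omega)
      (h.of_suffix (List.drop_suffix _ u))
  · exact fun h => ⟨n, le_rfl, h⟩

lemma Rp_le_length (w : Word) : Rp w ≤ w.length :=
  Rp_le_iff.mpr fun u hu h => by
    have := h.1.length_le
    simp [hu] at this

lemma Rp_reverse (w : Word) : Rp w.reverse = Lp w := by
  have hset : {n | ∀ u : Word, u.length = n → ¬ IsRightSpecial u w.reverse} =
      {n | ∀ u : Word, u.length = n → ¬ IsLeftSpecial u w} := by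
    ext n
    refine ⟨fun h u hu hls => ?_, fun h u hu hrs => h u.reverse (by simpa using hu) ?_⟩
    · exact h u.reverse (by simpa using hu) (isRightSpecial_reverse_iff.mpr hls)
    · rw [← isRightSpecial_reverse_iff]
      simpa using hrs
  rw [Rp, Lp, hset]

/-! ### Closed prefixes -/

lemma Hp_le_Hp_append (v z : Word) : Hp v ≤ Hp (v ++ z) := by
  by_cases hn : Hp (v ++ z) ≤ v.length
  · have honce := (Hp_le_iff (w := v ++ z) (Hp_le_length _)).mp le_rfl
    rw [List.take_append_of_le_length hn] at honce
    have h0 : OccursAt (v.take (Hp (v ++ z))) v 0 :=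
      occursAt_zero_iff_prefix.mpr (List.take_prefix _ v)
    exact (Hp_le_iff hn).mpr
      ⟨0, h0, fun j hj => honce.unique (hj.append_right z) (h0.append_right z)⟩
  · exact (Hp_le_length v).trans (by omega)

lemma OccursOnce.eq_zero_or_end_of_snoc {u v : Word} {x : AB} {i : ℕ} (hu : OccursOnce u v)
    (hpre : u <+: v) (h : OccursAt u (v ++ [x]) i) : i = 0 ∨ i + u.length = v.length + 1 := by
  by_cases hle : i + u.length ≤ v.length
  · exact Or.inl (hu.unique (h.of_append_right hle) (occursAt_zero_iff_prefix.mpr hpre))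
  · have := h.length_le
    simp only [List.length_append, List.length_singleton] at this
    omega

lemma Hp_snoc_le (v : Word) (x : AB) : Hp (v ++ [x]) ≤ Hp v + 1 := by
  have hv := Hp_le_length v
  have honce : OccursOnce (v.take (Hp v)) v := (Hp_le_iff hv).mp le_rfl
  have hpre : v.take (Hp v) <+: (v ++ [x]).take (Hp v + 1) := by
    rw [← List.take_append_of_le_length hv (l₂ := [x])]
    exact List.take_prefix_take_left (by omega)
  rw [Hp_le_iff (by simp only [List.length_append, List.length_singleton]; omega)]
  refine ⟨0, occursAt_zero_iff_prefix.mpr (List.take_prefix _ _), fun j hj => ?_⟩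
  have := hj.length_le
  rcases honce.eq_zero_or_end_of_snoc (List.take_prefix _ v) (hj.of_prefix hpre) with h | h
  · exact h
  · simp only [List.length_take, List.length_append, List.length_singleton] at this h
    omega

lemma isClosedWord_snoc_iff (v : Word) (x : AB) :
    IsClosedWord (v ++ [x]) ↔ ¬ OccursOnce (v.take (Hp v)) (v ++ [x]) := by
  have hv := Hp_le_length v
  have honce : OccursOnce (v.take (Hp v)) v := (Hp_le_iff hv).mp le_rfl
  have hplen : (v.take (Hp v)).length = Hp v := by simp only [List.length_take]; omega
  have hp0 : OccursAt (v.take (Hp v)) (v ++ [x]) 0 :=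
    occursAt_zero_iff_prefix.mpr ((List.take_prefix _ v).trans (List.prefix_append v [x]))
  constructor
  · rintro ⟨-, b, hbpre, hblt, hbsuf, hbocc⟩ hponce
    simp only [List.length_append, List.length_singleton] at hblt hbocc
    have hbv : b <+: v := by
      rw [List.prefix_iff_eq_take.mp hbpre, List.take_append_of_le_length (by omega)]
      exact List.take_prefix _ v
    have hbonce : OccursOnce b v := by
      refine ⟨0, occursAt_zero_iff_prefix.mpr hbv, fun j hj => ?_⟩
      have := hj.length_le
      rcases hbocc j (hj.append_right [x]) with h | h <;> omega
    have hpb : v.take (Hp v) <+: b := by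
      rw [List.prefix_iff_eq_take.mp hbv]
      exact List.take_prefix_take_left ((Hp_le_iff (by omega)).mpr
        (by rwa [← List.prefix_iff_eq_take.mp hbv]))
    have hpend := hbsuf.occursAt.of_prefix hpb
    simp only [List.length_append, List.length_singleton] at hpend
    exact not_occursOnce_of_ne hp0 hpend (by omega) hponce
  · intro hnot
    obtain ⟨i, hi, hi0⟩ := exists_ne_of_not_occursOnce hp0 hnot
    have hend : i + Hp v = v.length + 1 := by
      rcases honce.eq_zero_or_end_of_snoc (List.take_prefix _ v) hi with h | h <;> omega
    refine ⟨by simp, v.take (Hp v), (List.take_prefix _ v).trans (List.prefix_append v [x]),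
      by simp only [List.length_append, List.length_singleton, hplen]; omega,
      hi.isSuffix (by simp only [List.length_append, List.length_singleton, hplen]; omega),
      fun j hj => ?_⟩
    rcases honce.eq_zero_or_end_of_snoc (List.take_prefix _ v) hj with h | h
    · exact Or.inl h
    · exact Or.inr (by simpa using h)

open Classical in
lemma Hp_snoc (v : Word) (x : AB) :
    Hp (v ++ [x]) = Hp v + if IsClosedWord (v ++ [x]) then 1 else 0 := by
  have hv := Hp_le_length v
  have hle : Hp (v ++ [x]) ≤ Hp v ↔ OccursOnce (v.take (Hp v)) (v ++ [x]) := by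
    rw [Hp_le_iff (by simp only [List.length_append, List.length_singleton]; omega),
      List.take_append_of_le_length hv]
  have := Hp_le_Hp_append v [x]
  have := Hp_snoc_le v x
  rw [isClosedWord_snoc_iff, ← hle]
  split_ifs <;> omega

open Classical in
lemma Hp_take_eq_count (w : Word) {n : ℕ} (hn : n ≤ w.length) :
    Hp (w.take n) = Nat.count (fun k => IsClosedWord (w.take (k + 1))) n := by
  induction n with
  | zero => simpa using Hp_le_length ([] : Word)
  | succ n ih =>
    rw [Nat.count_succ, ← ih (by omega), List.take_succ_eq_append_getElem (by omega), Hp_snoc]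

/-! ### Factor complexity and special factors -/

def factors (w : Word) (n : ℕ) : Finset Word :=
  ((Finset.range (w.length + 1)).image fun i => (w.drop i).take n).filter (·.length = n)

lemma mem_factors {w u : Word} {n : ℕ} : u ∈ factors w n ↔ u <:+: w ∧ u.length = n := by
  simp only [factors, Finset.mem_filter, Finset.mem_image, Finset.mem_range]
  constructor
  · rintro ⟨⟨i, -, rfl⟩, hlen⟩
    exact ⟨((w.drop i).take_prefix n).isInfix.trans (w.drop_suffix i).isInfix, hlen⟩
  · rintro ⟨hinf, rfl⟩
    obtain ⟨i, hi⟩ := infix_iff_exists_occursAt.mp hinf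
    exact ⟨⟨i, by have := hi.length_le; omega, hi.2⟩, rfl⟩

lemma card_factors_zero (w : Word) : (factors w 0).card = 1 := by
  rw [Finset.card_eq_one]
  refine ⟨[], Finset.ext fun u => ?_⟩
  simp only [mem_factors, List.length_eq_zero_iff, Finset.mem_singleton]
  exact ⟨And.right, fun h => ⟨h ▸ List.nil_infix, h⟩⟩

lemma factors_eq_empty {w : Word} {n : ℕ} (h : w.length < n) : factors w n = ∅ :=
  Finset.eq_empty_of_forall_notMem fun u hu => by
    have := (mem_factors.mp hu).1.length_le
    rw [(mem_factors.mp hu).2] at this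
    omega

lemma card_factors_reverse (w : Word) (n : ℕ) :
    (factors w.reverse n).card = (factors w n).card :=
  Finset.card_nbij' List.reverse List.reverse
    (fun u hu => by simpa [mem_factors, ← List.reverse_infix (l₁ := u.reverse)] using hu)
    (fun u hu => by simpa [mem_factors] using hu)
    (fun u _ => u.reverse_reverse) (fun u _ => u.reverse_reverse)

lemma not_extendable_iff {v w : Word} (hv : v <:+: w) :
    (¬ v ++ [a] <:+: w ∧ ¬ v ++ [b] <:+: w) ↔ v <:+ w ∧ OccursOnce v w := by
  constructor
  · rintro ⟨ha, hb⟩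
    have hend : ∀ i, OccursAt v w i → i + v.length = w.length := fun i hi => by
      by_contra hne
      obtain ⟨c, hc⟩ := hi.exists_append_singleton (by have := hi.length_le; omega)
      cases c
      exacts [ha (infix_iff_exists_occursAt.mpr ⟨i, hc⟩),
        hb (infix_iff_exists_occursAt.mpr ⟨i, hc⟩)]
    obtain ⟨i, hi⟩ := infix_iff_exists_occursAt.mp hv
    refine ⟨hi.isSuffix (hend i hi), i, hi, fun j hj => ?_⟩
    have := hend j hj
    have := hend i hi
    omega
  · rintro ⟨hsuf, honce⟩
    have hnot : ∀ c, ¬ v ++ [c] <:+: w := fun c hc => by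
      obtain ⟨i, hi⟩ := infix_iff_exists_occursAt.mp hc
      have := honce.unique (hi.of_prefix (List.prefix_append v [c])) hsuf.occursAt
      have := hi.length_le
      simp only [List.length_append, List.length_singleton] at this
      omega
    exact ⟨hnot a, hnot b⟩

lemma card_filter_not_extendable {w : Word} {n : ℕ} (hn : n ≤ w.length) :
    ((factors w n).filter fun v => ¬ v ++ [a] <:+: w ∧ ¬ v ++ [b] <:+: w).card =
      if Kp w ≤ n then 1 else 0 := by
  classical
  rw [Finset.filter_congr fun v hv => not_extendable_iff (mem_factors.mp hv).1]
  have hsuffix : (factors w n).filter (fun v => v <:+ w ∧ OccursOnce v w) =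
      ({w.drop (w.length - n)} : Finset Word).filter (OccursOnce · w) := by
    ext v
    simp only [Finset.mem_filter, mem_factors, Finset.mem_singleton]
    constructor
    · rintro ⟨⟨-, rfl⟩, hsuf, honce⟩
      exact ⟨List.suffix_iff_eq_drop.mp hsuf, honce⟩
    · rintro ⟨rfl, honce⟩
      exact ⟨⟨(w.drop_suffix _).isInfix, by simp only [List.length_drop]; omega⟩,
        w.drop_suffix _, honce⟩
  rw [hsuffix, Finset.filter_singleton, ← Kp_le_iff hn]
  split_ifs <;> rfl

lemma card_filter_take_eq {w v : Word} {n : ℕ} (hv : v ∈ factors w n) :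
    ((factors w (n + 1)).filter (·.take n = v)).card =
      (if v ++ [a] <:+: w then 1 else 0) + (if v ++ [b] <:+: w then 1 else 0) := by
  have hvlen := (mem_factors.mp hv).2
  have hfiber : (factors w (n + 1)).filter (·.take n = v) =
      ({v ++ [a], v ++ [b]} : Finset Word).filter (· <:+: w) := by
    ext u
    simp only [Finset.mem_filter, mem_factors, Finset.mem_insert, Finset.mem_singleton]
    constructor
    · rintro ⟨⟨hinf, hlen⟩, rfl⟩
      obtain ⟨c, hc⟩ := List.length_eq_one_iff.mp (show (u.drop n).length = 1 by simp [hlen])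
      have hu : u = u.take n ++ [c] := by rw [← hc, List.take_append_drop]
      refine ⟨?_, hinf⟩
      cases c
      exacts [Or.inl hu, Or.inr hu]
    · rintro ⟨hu | hu, hinf⟩ <;> subst hu <;> simp [hinf, hvlen]
  rw [hfiber, Finset.card_filter, Finset.sum_pair (by simp)]

instance (u w : Word) : Decidable (IsRightSpecial u w) :=
  inferInstanceAs (Decidable (_ ∧ _))

def rightSpecialCount (w : Word) (n : ℕ) : ℕ :=
  ((factors w n).filter (IsRightSpecial · w)).card

lemma rightSpecialCount_eq_zero_iff {w : Word} {n : ℕ} :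
    rightSpecialCount w n = 0 ↔ Rp w ≤ n := by
  rw [Rp_le_iff, rightSpecialCount, Finset.card_eq_zero, Finset.filter_eq_empty_iff]
  constructor
  · intro h u hlen hrs
    exact h (mem_factors.mpr ⟨(u.prefix_append [a]).isInfix.trans hrs.1, hlen⟩) hrs
  · exact fun h u hu => h u (mem_factors.mp hu).2

lemma card_factors_succ_add {w : Word} {n : ℕ} (hn : n ≤ w.length) :
    (factors w (n + 1)).card + (if Kp w ≤ n then 1 else 0) =
      (factors w n).card + rightSpecialCount w n := by
  classical
  have hmaps : ∀ u ∈ factors w (n + 1), u.take n ∈ factors w n := fun u hu => by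
    obtain ⟨hinf, hlen⟩ := mem_factors.mp hu
    exact mem_factors.mpr ⟨(u.take_prefix n).isInfix.trans hinf, by simp [hlen]⟩
  rw [Finset.card_eq_sum_card_fiberwise hmaps,
    Finset.sum_congr rfl fun v hv => card_filter_take_eq hv, ← card_filter_not_extendable hn,
    rightSpecialCount, Finset.card_eq_sum_ones (factors w n), Finset.card_filter,
    Finset.card_filter, ← Finset.sum_add_distrib, ← Finset.sum_add_distrib]
  refine Finset.sum_congr rfl fun v _ => ?_
  simp only [IsRightSpecial]
  split_ifs <;> simp_all

lemma sum_range_ite_le (N K : ℕ) :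
    ∑ n ∈ Finset.range N, (if K ≤ n then 1 else 0) = N - K := by
  rw [Finset.sum_boole, show {n ∈ Finset.range N | K ≤ n} = Finset.Ico K N by
    ext
    simp only [Finset.mem_filter, Finset.mem_range, Finset.mem_Ico]
    omega]
  simp

lemma sum_range_ite_lt {N R : ℕ} (hR : R ≤ N) :
    ∑ n ∈ Finset.range N, (if n < R then 1 else 0) = R := by
  rw [Finset.sum_boole, show {n ∈ Finset.range N | n < R} = Finset.range R by
    ext
    simp only [Finset.mem_filter, Finset.mem_range]
    omega]
  simp

lemma sum_rightSpecialCount_add_Kp (w : Word) :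
    ∑ n ∈ Finset.range (w.length + 1), rightSpecialCount w n + Kp w = w.length := by
  have hrec : ∑ n ∈ Finset.range (w.length + 1),
      ((factors w (n + 1)).card + if Kp w ≤ n then 1 else 0) =
      ∑ n ∈ Finset.range (w.length + 1), ((factors w n).card + rightSpecialCount w n) :=
    Finset.sum_congr rfl fun n hn =>
      card_factors_succ_add (Nat.lt_succ_iff.mp (Finset.mem_range.mp hn))
  rw [Finset.sum_add_distrib, Finset.sum_add_distrib, sum_range_ite_le] at hrec
  have htel := (Finset.sum_range_succ' (fun n => (factors w n).card) (w.length + 1)).symm.trans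
    (Finset.sum_range_succ _ _)
  rw [card_factors_zero, factors_eq_empty (n := w.length + 1) (by omega),
    Finset.card_empty] at htel
  have := Kp_le_length w
  omega

lemma rightSpecialCount_reverse_add {w : Word} {n : ℕ} (hn : n ≤ w.length) :
    rightSpecialCount w.reverse n + (if Kp w ≤ n then 1 else 0) =
      rightSpecialCount w n + (if Hp w ≤ n then 1 else 0) := by
  have h := card_factors_succ_add hn
  have hrev := card_factors_succ_add (w := w.reverse) (by simpa using hn)
  rw [card_factors_reverse, card_factors_reverse, Kp_reverse] at hrev
  omega

/-! ### Trapezoidal words -/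

lemma isTrapezoidal_iff_forall_rightSpecialCount_le_one {w : Word} :
    IsTrapezoidal w ↔ ∀ n, rightSpecialCount w n ≤ 1 := by
  have hsum := sum_rightSpecialCount_add_Kp w
  have hR := Rp_le_length w
  have hind := sum_range_ite_lt (N := w.length + 1) (by omega : Rp w ≤ w.length + 1)
  have hzero (n : ℕ) : rightSpecialCount w n = 0 ↔ Rp w ≤ n := rightSpecialCount_eq_zero_iff
  have hge (n : ℕ) (_ : n ∈ Finset.range (w.length + 1)) :
      (if n < Rp w then 1 else 0) ≤ rightSpecialCount w n := by
    have := hzero n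
    split_ifs <;> omega
  calc IsTrapezoidal w ↔ ∑ n ∈ Finset.range (w.length + 1), (if n < Rp w then 1 else 0) =
        ∑ n ∈ Finset.range (w.length + 1), rightSpecialCount w n := by
        unfold IsTrapezoidal
        omega
    _ ↔ ∀ n ∈ Finset.range (w.length + 1),
          (if n < Rp w then 1 else 0) = rightSpecialCount w n :=
        Finset.sum_eq_sum_iff_of_le hge
    _ ↔ ∀ n, rightSpecialCount w n ≤ 1 := by
        refine forall_congr' fun n => ?_
        have := hzero n
        rw [Finset.mem_range]
        split_ifs <;> omega

lemma IsTrapezoidal.rightSpecialCount_le_one {w : Word} (hw : IsTrapezoidal w) (n : ℕ) :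
    rightSpecialCount w n ≤ 1 :=
  isTrapezoidal_iff_forall_rightSpecialCount_le_one.mp hw n

lemma Kp_le_length_succ_of_isSuffix {u w : Word} (hu : u <:+ w) (hlt : u.length < w.length)
    (hocc : ∀ j, OccursAt u w j → j = 0 ∨ j + u.length = w.length) :
    Kp w ≤ u.length + 1 := by
  have hslen : (w.drop (w.length - (u.length + 1))).length = u.length + 1 := by
    simp only [List.length_drop]
    omega
  have hus : u <:+ w.drop (w.length - (u.length + 1)) :=
    List.suffix_of_suffix_length_le hu (List.drop_suffix _ w) (by omega)
  rw [Kp_le_iff hlt]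
  refine ⟨_, (List.drop_suffix _ w).occursAt, fun j hj => ?_⟩
  have := hj.length_le
  have := hocc _ (hj.of_suffix hus)
  rw [hslen] at this ⊢
  omega

lemma isRightSpecial_take_of_occursAt {w : Word} {m i : ℕ}
    (honce : OccursOnce (w.take (m + 1)) w) (hi : OccursAt (w.take m) w i) (hi0 : i ≠ 0)
    (hlt : i + m < w.length) : IsRightSpecial (w.take m) w := by
  have hm : m < w.length := by omega
  obtain ⟨c, hc⟩ := hi.exists_append_singleton (by simp only [List.length_take]; omega)
  have hx : w.take m ++ [w[m]] <:+: w := by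
    rw [← List.take_succ_eq_append_getElem hm]
    exact (List.take_prefix _ w).isInfix
  have hcx : c ≠ w[m] := by
    rintro rfl
    rw [← List.take_succ_eq_append_getElem hm] at hc
    exact not_occursOnce_of_ne hc (occursAt_zero_iff_prefix.mpr (List.take_prefix _ w)) hi0 honce
  have hc' : w.take m ++ [c] <:+: w := infix_iff_exists_occursAt.mpr ⟨i, hc⟩
  revert hx hcx
  generalize w[m] = x
  cases c <;> cases x <;> simp_all [IsRightSpecial]

/-- A right special factor of length `m + 1` drops to the unique right special factor `w.take m`,
so appending `w[m]` to it yields a second occurrence of `w.take (m + 1)`. -/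
lemma not_occursOnce_take_succ {w : Word} {m : ℕ} (hs : rightSpecialCount w m ≤ 1)
    (hrs : IsRightSpecial (w.take m) w) (hR : m + 1 < Rp w) :
    ¬ OccursOnce (w.take (m + 1)) w := by
  obtain ⟨u, hulen, hu⟩ : ∃ u : Word, u.length = m + 1 ∧ IsRightSpecial u w := by
    by_contra! h
    exact absurd (Rp_le_iff.mpr h) (by omega)
  have hm : m < w.length := by
    have := hu.1.length_le
    simp only [List.length_append, List.length_singleton] at this
    omega
  have hdrop : u.drop 1 = w.take m := by
    refine Finset.card_le_one.mp hs _ ?_ _ ?_ <;> rw [Finset.mem_filter, mem_factors]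
    · exact ⟨⟨(u.drop_suffix 1).isInfix.trans ((u.prefix_append [a]).isInfix.trans hu.1),
        by simp [hulen]⟩, hu.of_suffix (u.drop_suffix 1)⟩
    · exact ⟨⟨(List.take_prefix _ w).isInfix, by simp only [List.length_take]; omega⟩, hrs⟩
  have hux : ∀ c, u ++ [c] <:+: w := fun c => by cases c; exacts [hu.1, hu.2]
  obtain ⟨t, ht⟩ := infix_iff_exists_occursAt.mp (hux w[m])
  have hsuf : w.take (m + 1) <:+ u ++ [w[m]] := by
    rw [List.take_succ_eq_append_getElem hm, ← hdrop]
    exact ⟨u.take 1, by rw [← List.append_assoc, List.take_append_drop]⟩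
  refine not_occursOnce_of_ne (ht.of_suffix hsuf)
    (occursAt_zero_iff_prefix.mpr (List.take_prefix _ w)) ?_
  simp only [List.length_append, List.length_singleton, hulen, List.length_take]
  omega

/-- Write `H = m + 1`; the prefix `w.take m` is repeated. An internal occurrence makes it right
special, which `not_occursOnce_take_succ` rules out when `H < R`; otherwise it is a border with no
internal occurrence, and then the suffix of length `m + 1` is unrepeated, so `K ≤ H`. -/
lemma IsTrapezoidal.min_Kp_Rp_le_Hp {w : Word} (hw : IsTrapezoidal w) :
    min (Kp w) (Rp w) ≤ Hp w := by
  by_contra! h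
  obtain ⟨hK, hR⟩ := lt_min_iff.mp h
  have hKlen := Kp_le_length w
  obtain ⟨m, hm⟩ : ∃ m, Hp w = m + 1 := by
    refine Nat.exists_eq_succ_of_ne_zero fun h0 => ?_
    have honce := (Hp_le_iff (Nat.zero_le w.length)).mp h0.le
    exact not_occursOnce_of_ne (i := 0) (j := 1) ⟨by simp, by simp⟩
      ⟨by simp only [List.take_zero, List.length_nil]; omega, by simp⟩ one_ne_zero.symm honce
  have hmlen : m + 1 ≤ w.length := hm ▸ Hp_le_length w
  have honce : OccursOnce (w.take (m + 1)) w := (Hp_le_iff hmlen).mp hm.le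
  have hrep : ¬ OccursOnce (w.take m) w := fun h => by
    have := (Hp_le_iff (by omega)).mpr h
    omega
  have hlen : (w.take m).length = m := by simp only [List.length_take]; omega
  by_cases hend : ∀ j, OccursAt (w.take m) w j → j ≠ 0 → j + m = w.length
  · obtain ⟨i, hi, hi0⟩ :=
      exists_ne_of_not_occursOnce (occursAt_zero_iff_prefix.mpr (List.take_prefix m w)) hrep
    have := Kp_le_length_succ_of_isSuffix (hi.isSuffix (by rw [hlen, hend i hi hi0]))
      (by omega) fun j hj => by
        rw [hlen]
        by_cases hj0 : j = 0
        exacts [Or.inl hj0, Or.inr (hend j hj hj0)]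
    omega
  · obtain ⟨i, hi, hi0, hne⟩ :
        ∃ i, OccursAt (w.take m) w i ∧ i ≠ 0 ∧ i + m ≠ w.length := by
      simpa using hend
    have := hi.length_le
    exact not_occursOnce_take_succ (hw.rightSpecialCount_le_one m)
      (isRightSpecial_take_of_occursAt honce hi hi0 (by omega)) (by omega) honce

lemma IsTrapezoidal.reverse {w : Word} (hw : IsTrapezoidal w) : IsTrapezoidal w.reverse := by
  refine isTrapezoidal_iff_forall_rightSpecialCount_le_one.mpr fun n => ?_
  by_cases hn : n ≤ w.length
  · have := rightSpecialCount_reverse_add hn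
    have := hw.rightSpecialCount_le_one n
    have := rightSpecialCount_eq_zero_iff (w := w) (n := n)
    have := hw.min_Kp_Rp_le_Hp
    split_ifs at * <;> omega
  · have hlen : w.reverse.length ≤ n := by
      simp only [List.length_reverse]
      omega
    have := rightSpecialCount_eq_zero_iff.mpr ((Rp_le_length w.reverse).trans hlen)
    omega

lemma Lp_add_Hp_of_isTrapezoidal {w : Word} (hw : IsTrapezoidal w) : Lp w + Hp w = w.length := by
  have := hw.reverse
  rw [IsTrapezoidal, Kp_reverse, Rp_reverse, List.length_reverse] at this
  omega

/-! ### Counting prefixes -/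

lemma ncard_setOf_take_eq_count (w : Word) (P : Word → Prop) [DecidablePred P] :
    {n | 1 ≤ n ∧ n ≤ w.length ∧ P (w.take n)}.ncard =
      Nat.count (fun k => P (w.take (k + 1))) w.length := by
  have hset : {n | 1 ≤ n ∧ n ≤ w.length ∧ P (w.take n)} =
      (· + 1) '' ↑((Finset.range w.length).filter fun k => P (w.take (k + 1))) := by
    ext n
    simp only [Set.mem_ofPred_eq, Set.mem_image, Finset.coe_filter, Finset.mem_range]
    constructor
    · rintro ⟨h1, hn, hP⟩
      exact ⟨n - 1, ⟨by omega, by rwa [Nat.sub_add_cancel h1]⟩, by omega⟩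
    · rintro ⟨k, ⟨hk, hP⟩, rfl⟩
      exact ⟨by omega, by omega, hP⟩
  rw [hset, Set.ncard_image_of_injective _ (add_left_injective 1), Set.ncard_coe_finset,
    Nat.count_eq_card_filter_range]

open Classical in
lemma count_isOpenWord_add_count_isClosedWord (w : Word) :
    Nat.count (fun k => IsOpenWord (w.take (k + 1))) w.length +
      Nat.count (fun k => IsClosedWord (w.take (k + 1))) w.length = w.length := by
  simp only [Nat.count_eq_card_filter_range]
  have hopen : ∀ k ∈ Finset.range w.length,
      IsOpenWord (w.take (k + 1)) ↔ ¬ IsClosedWord (w.take (k + 1)) := fun k hk =>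
    and_iff_right (List.ne_nil_of_length_pos (by simp [Finset.mem_range.mp hk]))
  rw [Finset.filter_congr hopen, add_comm, Finset.card_filter_add_card_filter_not,
    Finset.card_range]

/-- `H w` counts the closed nonempty prefixes of `w`; if `w` is trapezoidal,
`L w` counts the open nonempty prefixes. -/
theorem H_L_count_closed_open_prefixes (w : Word) :
    Hp w = Set.ncard {n : ℕ | 1 ≤ n ∧ n ≤ w.length ∧ IsClosedWord (w.take n)} ∧
    (IsTrapezoidal w →
      Lp w = Set.ncard {n : ℕ | 1 ≤ n ∧ n ≤ w.length ∧ IsOpenWord (w.take n)}) := by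
  classical
  have hclosed := Hp_take_eq_count w le_rfl
  rw [List.take_length] at hclosed
  rw [ncard_setOf_take_eq_count, ncard_setOf_take_eq_count]
  refine ⟨hclosed, fun hw => ?_⟩
  have := Lp_add_Hp_of_isTrapezoidal hw
  have := count_isOpenWord_add_count_isClosedWord w
  omega
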